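/- Let α > 2, δ := 2/α, D > 0, λ > 0, μ > 0, p ∈ (0,1], m ∈ {2,4}, and set κ_q := Γ(1+q)·Γ(1−q). For s > 0 and t ≥ 0 define 𝓛_t(s) := exp(−λ·p·s^(δ/2)·∫_{t²·s^(−δ)}^∞ 1/((1 + u^(1/δ))·√(u − t²·s^(−δ))) du), and define the success probability p_m(θ) := exp(−m·λ·p·D·θ^(δ/2)·κ_{δ/2} − 2μ·∫₀^∞ (1 − 𝓛_t(θ·D^α)) dt) for θ > 0. Then lim_{θ→0⁺} (1 − p_m(θ)) / (m·λ·p·D·κ_{δ/2}·θ^(δ/2)) = 1. -/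

import Mathlib

open Real MeasureTheory Filter
open Set

/-- `κ_q := Γ(1+q)·Γ(1−q)`. -/
noncomputable def kappa (q : ℝ) : ℝ := Real.Gamma (1 + q) * Real.Gamma (1 - q)

/-- `𝓛_t(s)` from Corollary 1 of the paper. -/
noncomputable def Lfun (lam p δ t s : ℝ) : ℝ :=
  Real.exp (-(lam * p * s ^ (δ / 2) *
    ∫ u in Set.Ioi (t ^ 2 * s ^ (-δ)),
      1 / ((1 + u ^ (1 / δ)) * Real.sqrt (u - t ^ 2 * s ^ (-δ)))))

/-- The PLP-PPP success probability of the typical vehicle of order `m`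
(Corollary 1 of the paper). -/
noncomputable def pm (α D lam mu p m θ : ℝ) : ℝ :=
  Real.exp (-(m * lam * p * D * θ ^ ((2 / α) / 2) * kappa ((2 / α) / 2)) -
    2 * mu * ∫ t in Set.Ioi (0 : ℝ), (1 - Lfun lam p (2 / α) t (θ * D ^ α)))

lemma aux_integrableOn_Ioc_shift_rpow (a b r : ℝ) (hr : -1 < r) :
    MeasureTheory.IntegrableOn (fun u => (u - a) ^ r) (Set.Ioc a b) := by
  rcases le_or_gt a b with hab | hab
  · have h : IntervalIntegrable (fun x : ℝ => x ^ r) volume (a - a) (b - a) :=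
      intervalIntegral.intervalIntegrable_rpow' hr
    have h2 := h.comp_sub_right a
    rw [sub_add_cancel, sub_add_cancel] at h2
    exact (intervalIntegrable_iff_integrableOn_Ioc_of_le hab).mp h2
  · rw [Set.Ioc_eq_empty (by exact not_lt.mpr hab.le)]
    exact integrableOn_empty

lemma aux_integral_Ioc_shift_rpow (a b r : ℝ) (hab : a ≤ b) (hr : -1 < r) :
    ∫ u in Set.Ioc a b, (u - a) ^ r = (b - a) ^ (r + 1) / (r + 1) := by
  rw [← intervalIntegral.integral_of_le hab]
  have := intervalIntegral.integral_comp_sub_right (a := a) (b := b) (fun x : ℝ => x ^ r) a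
  rw [this, sub_self, integral_rpow (Or.inl hr), Real.zero_rpow (by linarith : r + 1 ≠ 0),
    sub_zero]

/-- the inner integrand -/
noncomputable def phi (α a u : ℝ) : ℝ := 1 / ((1 + u ^ (α/2)) * Real.sqrt (u - a))

lemma phi_nonneg {α a : ℝ} (ha : 0 ≤ a) (u : ℝ) (hu : u ∈ Set.Ioi a) : 0 ≤ phi α a u := by
  have hu0 : 0 ≤ u := le_trans ha (le_of_lt hu)
  have : 0 ≤ (1 + u ^ (α/2)) * Real.sqrt (u - a) :=
    mul_nonneg (by positivity) (Real.sqrt_nonneg _)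
  unfold phi; positivity

lemma inner_nonneg {α : ℝ} {a : ℝ} (ha : 0 ≤ a) :
    0 ≤ ∫ u in Set.Ioi a, phi α a u :=
  setIntegral_nonneg measurableSet_Ioi (fun u hu => phi_nonneg ha u hu)

/-- generic bound machine: bound `∫_{Ioi a} F` by a two-piece dominating function -/
lemma inner_le_of_pieces {a T : ℝ} (F : ℝ → ℝ) (f g : ℝ → ℝ)
    (hF0 : ∀ u, u ∈ Set.Ioi a → 0 ≤ F u)
    (hf : MeasureTheory.IntegrableOn f (Set.Ioc a T))
    (hg : MeasureTheory.IntegrableOn g (Set.Ioi T))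
    (hfb : ∀ u, u ∈ Set.Ioc a T → F u ≤ f u)
    (hgb : ∀ u, u ∈ Set.Ioi T → F u ≤ g u)
    (hf0 : ∀ u, u ∈ Set.Ioc a T → 0 ≤ f u)
    (hg0 : ∀ u, u ∈ Set.Ioi T → 0 ≤ g u) :
    ∫ u in Set.Ioi a, F u ≤ (∫ u in Set.Ioc a T, f u) + ∫ u in Set.Ioi T, g u := by
  set ψ : ℝ → ℝ := (Set.Ioc a T).indicator f + (Set.Ioi T).indicator g with hψ
  have hψint : MeasureTheory.Integrable ψ := by
    apply MeasureTheory.Integrable.add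
    · exact (integrable_indicator_iff measurableSet_Ioc).mpr hf
    · exact (integrable_indicator_iff measurableSet_Ioi).mpr hg
  have key : ∫ u in Set.Ioi a, F u ≤ ∫ u, ψ u := by
    rw [← MeasureTheory.integral_indicator measurableSet_Ioi]
    apply MeasureTheory.integral_mono_of_nonneg
    · filter_upwards with u
      simp only [Pi.zero_apply]
      by_cases hu : u ∈ Set.Ioi a
      · rw [Set.indicator_of_mem hu]; exact hF0 u hu
      · simp [Set.indicator_of_notMem hu]
    · exact hψint
    · filter_upwards with u
      by_cases hu : u ∈ Set.Ioi a
      · rw [Set.indicator_of_mem hu, hψ]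
        rcases le_or_gt u T with huT | huT
        · have hmem : u ∈ Set.Ioc a T := ⟨hu, huT⟩
          have : u ∉ Set.Ioi T := by simp [not_lt.mpr huT]
          simp only [Pi.add_apply, Set.indicator_of_mem hmem, Set.indicator_of_notMem this,
            add_zero]
          exact hfb u hmem
        · have hmem : u ∈ Set.Ioi T := huT
          have : u ∉ Set.Ioc a T := fun h => absurd h.2 (not_le.mpr huT)
          simp only [Pi.add_apply, Set.indicator_of_mem hmem, Set.indicator_of_notMem this,
            zero_add]
          exact hgb u hmem
      · rw [Set.indicator_of_notMem hu, hψ]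
        have h1 : 0 ≤ (Set.Ioc a T).indicator f u := by
          by_cases h : u ∈ Set.Ioc a T
          · rw [Set.indicator_of_mem h]; exact hf0 u h
          · rw [Set.indicator_of_notMem h]
        have h2 : 0 ≤ (Set.Ioi T).indicator g u := by
          by_cases h : u ∈ Set.Ioi T
          · rw [Set.indicator_of_mem h]; exact hg0 u h
          · rw [Set.indicator_of_notMem h]
        exact add_nonneg h1 h2
  rw [hψ] at key
  simp only [Pi.add_apply] at key
  rwa [MeasureTheory.integral_add ((integrable_indicator_iff measurableSet_Ioc).mpr hf)
      ((integrable_indicator_iff measurableSet_Ioi).mpr hg),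
    MeasureTheory.integral_indicator measurableSet_Ioc,
    MeasureTheory.integral_indicator measurableSet_Ioi] at key

lemma inner_bound_a {α : ℝ} (hα : 2 < α) {a : ℝ} (ha : 0 ≤ a) :
    ∫ u in Set.Ioi a, phi α a u ≤ 2 + 2 / (α - 2) := by
  have h1 : (-1 : ℝ) < -(1/2) := by norm_num
  have hcalc : ∫ u in Set.Ioi a, phi α a u ≤
      (∫ u in Set.Ioc a (a+1), (u - a) ^ (-(1/2) : ℝ)) +
        ∫ u in Set.Ioi (a+1), u ^ (-(α/2)) := by
    apply inner_le_of_pieces (phi α a) _ _ (fun u hu => phi_nonneg ha u hu)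
    · exact aux_integrableOn_Ioc_shift_rpow a (a+1) _ h1
    · exact integrableOn_Ioi_rpow_of_lt (by linarith) (by linarith)
    · intro u hu
      have hua : 0 < u - a := by have := hu.1; linarith
      have hu0 : 0 < u := lt_of_le_of_lt ha hu.1
      have hden : Real.sqrt (u - a) ≤ (1 + u ^ (α/2)) * Real.sqrt (u - a) := by
        nlinarith [Real.sqrt_nonneg (u - a), Real.rpow_nonneg hu0.le (α/2)]
      have hsp : 0 < Real.sqrt (u - a) := Real.sqrt_pos.mpr hua
      calc phi α a u ≤ 1 / Real.sqrt (u - a) := by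
            unfold phi; exact one_div_le_one_div_of_le hsp hden
        _ = (u - a) ^ (-(1/2) : ℝ) := by
            rw [Real.rpow_neg hua.le, ← Real.sqrt_eq_rpow, one_div]
    · intro u hu
      have hu1 : (1:ℝ) < u := by have := Set.mem_Ioi.mp hu; linarith
      have hu0 : 0 < u := by linarith
      have hsq : 1 ≤ Real.sqrt (u - a) := by
        rw [show (1:ℝ) = Real.sqrt 1 by simp]
        exact Real.sqrt_le_sqrt (by have := Set.mem_Ioi.mp hu; linarith)
      have hpow : 0 < u ^ (α/2) := Real.rpow_pos_of_pos hu0 _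
      have hden : u ^ (α/2) ≤ (1 + u ^ (α/2)) * Real.sqrt (u - a) := by
        nlinarith
      calc phi α a u ≤ 1 / u ^ (α/2) := one_div_le_one_div_of_le hpow hden
        _ = u ^ (-(α/2)) := by rw [Real.rpow_neg hu0.le, one_div]
    · intro u hu
      have hua : (0:ℝ) ≤ u - a := by have := hu.1; linarith
      exact Real.rpow_nonneg hua _
    · intro u hu
      have hu0 : (0:ℝ) ≤ u := by have := Set.mem_Ioi.mp hu; linarith
      exact Real.rpow_nonneg hu0 _
  refine hcalc.trans ?_
  have e1 : ∫ u in Set.Ioc a (a+1), (u - a) ^ (-(1/2) : ℝ) = 2 := by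
    rw [aux_integral_Ioc_shift_rpow a (a+1) _ (by linarith) h1]
    norm_num
  have e2 : ∫ u in Set.Ioi (a+1), u ^ (-(α/2)) ≤ 2 / (α - 2) := by
    rw [integral_Ioi_rpow_of_lt (by linarith) (by linarith : (0:ℝ) < a + 1)]
    have hrw : -(a+1) ^ (-(α/2) + 1) / (-(α/2) + 1) =
        (a+1) ^ (-(α/2) + 1) / ((α-2)/2) := by
      rw [show -(α/2) + 1 = -((α-2)/2) from by ring, div_neg, neg_div, neg_neg]
    rw [hrw]
    have hle1 : (a+1 : ℝ) ^ (-(α/2) + 1) ≤ 1 :=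
      Real.rpow_le_one_of_one_le_of_nonpos (by linarith) (by linarith)
    have hd : (0:ℝ) < (α-2)/2 := by linarith
    calc (a+1 : ℝ) ^ (-(α/2) + 1) / ((α-2)/2) ≤ 1 / ((α-2)/2) :=
          (div_le_div_iff_of_pos_right hd).mpr hle1
      _ = 2 / (α - 2) := by rw [div_eq_div_iff (by linarith) (by linarith)]; ring
  linarith

lemma inner_bound_b {α : ℝ} (hα : 2 < α) {a : ℝ} (ha : 0 < a) :
    ∫ u in Set.Ioi a, phi α a u ≤ (2 + 2 / (α - 1)) * a ^ ((1 - α)/2) := by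
  have h1 : (-1 : ℝ) < -(1/2) := by norm_num
  have hcalc : ∫ u in Set.Ioi a, phi α a u ≤
      (∫ u in Set.Ioc a (2*a), a ^ (-(α/2)) * (u - a) ^ (-(1/2) : ℝ)) +
        ∫ u in Set.Ioi (2*a), Real.sqrt 2 * u ^ (-((α+1)/2)) := by
    apply inner_le_of_pieces (phi α a) _ _ (fun u hu => phi_nonneg ha.le u hu)
    · exact (aux_integrableOn_Ioc_shift_rpow a (2*a) _ h1).const_mul _
    · exact (integrableOn_Ioi_rpow_of_lt (by linarith) (by linarith)).const_mul _
    · intro u hu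
      have hua : 0 < u - a := by have := hu.1; linarith
      have hu0 : 0 < u := lt_trans ha hu.1
      have hsp : 0 < Real.sqrt (u - a) := Real.sqrt_pos.mpr hua
      have hra : 0 < a ^ (α/2) := Real.rpow_pos_of_pos ha _
      have hmono : a ^ (α/2) ≤ u ^ (α/2) := Real.rpow_le_rpow ha.le hu.1.le (by linarith)
      have hden : a ^ (α/2) * Real.sqrt (u - a) ≤ (1 + u ^ (α/2)) * Real.sqrt (u - a) := by
        apply mul_le_mul_of_nonneg_right _ hsp.le
        nlinarith
      calc phi α a u ≤ 1 / (a ^ (α/2) * Real.sqrt (u - a)) :=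
            one_div_le_one_div_of_le (by positivity) hden
        _ = a ^ (-(α/2)) * (u - a) ^ (-(1/2) : ℝ) := by
            rw [Real.rpow_neg ha.le, Real.rpow_neg hua.le, one_div, mul_inv]
            congr 1
            rw [← Real.sqrt_eq_rpow]
    · intro u hu
      have h2a : 2*a < u := Set.mem_Ioi.mp hu
      have hu0 : 0 < u := by linarith
      have hua : u/2 ≤ u - a := by linarith
      have hsq : Real.sqrt u / Real.sqrt 2 ≤ Real.sqrt (u - a) := by
        rw [← Real.sqrt_div hu0.le 2]
        exact Real.sqrt_le_sqrt hua
      have hpow : 0 < u ^ (α/2) := Real.rpow_pos_of_pos hu0 _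
      have hsu : 0 < Real.sqrt u := Real.sqrt_pos.mpr hu0
      have hden : u ^ (α/2) * (Real.sqrt u / Real.sqrt 2) ≤
          (1 + u ^ (α/2)) * Real.sqrt (u - a) := by
        apply mul_le_mul (by linarith) hsq (by positivity) (by positivity)
      calc phi α a u ≤ 1 / (u ^ (α/2) * (Real.sqrt u / Real.sqrt 2)) :=
            one_div_le_one_div_of_le (by positivity) hden
        _ = Real.sqrt 2 * u ^ (-((α+1)/2)) := by
            rw [Real.sqrt_eq_rpow u]
            rw [show u ^ (α/2) * (u ^ ((1:ℝ)/2) / Real.sqrt 2) = u ^ ((α+1)/2) / Real.sqrt 2 from by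
              rw [mul_div_assoc', ← Real.rpow_add hu0,
                show α/2 + 1/2 = (α+1)/2 from by ring]]
            rw [one_div, inv_div, Real.rpow_neg hu0.le, div_eq_mul_inv]
    · intro u hu
      have hua : (0:ℝ) ≤ u - a := by have := hu.1; linarith
      positivity
    · intro u hu
      have hu0 : (0:ℝ) ≤ u := by have := Set.mem_Ioi.mp hu; linarith
      positivity
  refine hcalc.trans ?_
  have e1 : ∫ u in Set.Ioc a (2*a), a ^ (-(α/2)) * (u - a) ^ (-(1/2) : ℝ) =
      2 * a ^ ((1 - α)/2) := by
    rw [MeasureTheory.integral_const_mul, aux_integral_Ioc_shift_rpow a (2*a) _ (by linarith) h1]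
    have h2aa : 2*a - a = a := by ring
    have h12 : (-(1/2) : ℝ) + 1 = 1/2 := by norm_num
    rw [h2aa, h12]
    have hsplit : a ^ (-(α/2)) * (a ^ ((1:ℝ)/2) / (1/2)) =
        2 * (a ^ (-(α/2)) * a ^ ((1:ℝ)/2)) := by ring
    rw [hsplit, ← Real.rpow_add ha, show -(α/2) + 1/2 = (1-α)/2 from by ring]
  have e2 : ∫ u in Set.Ioi (2*a), Real.sqrt 2 * u ^ (-((α+1)/2)) ≤
      (2/(α-1)) * a ^ ((1 - α)/2) := by
    rw [MeasureTheory.integral_const_mul,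
      integral_Ioi_rpow_of_lt (by linarith) (by linarith : (0:ℝ) < 2*a)]
    have hexp : -((α+1)/2) + 1 = -((α-1)/2) := by ring
    rw [hexp, div_neg, neg_div, neg_neg]
    rw [show ((2:ℝ)*a) ^ (-((α-1)/2)) = (2:ℝ) ^ (-((α-1)/2)) * a ^ (-((α-1)/2)) from
      Real.mul_rpow (by norm_num) ha.le]
    have hsqrt2 : Real.sqrt 2 * (2:ℝ) ^ (-((α-1)/2)) ≤ 1 := by
      rw [Real.sqrt_eq_rpow, ← Real.rpow_add (by norm_num : (0:ℝ) < 2)]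
      exact Real.rpow_le_one_of_one_le_of_nonpos (by norm_num) (by linarith)
    have ha' : (0:ℝ) ≤ a ^ (-((α-1)/2)) := Real.rpow_nonneg ha.le _
    have hne : (α:ℝ) - 1 ≠ 0 := by intro h; nlinarith
    have h2 : Real.sqrt 2 * ((2:ℝ) ^ (-((α-1)/2)) * a ^ (-((α-1)/2)) / ((α-1)/2)) =
        (Real.sqrt 2 * (2:ℝ) ^ (-((α-1)/2))) * a ^ (-((α-1)/2)) * (2/(α-1)) := by
      field_simp
    rw [h2, show ((1:ℝ) - α)/2 = -((α-1)/2) from by ring]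
    have hd : (0:ℝ) < 2/(α-1) := div_pos (by norm_num) (by linarith)
    nlinarith [mul_nonneg (mul_nonneg (sub_nonneg.mpr hsqrt2) ha') hd.le]
  have hfin : (2:ℝ) * a ^ ((1 - α)/2) + (2/(α-1)) * a ^ ((1-α)/2) =
      (2 + 2/(α-1)) * a ^ ((1-α)/2) := by ring
  linarith

/-- `𝓛_t(s)` in terms of `phi`. -/
lemma Lfun_eq {α lam p s : ℝ} (t : ℝ) :
    Real.exp (-(lam * p * s ^ ((2/α) / 2) *
      ∫ u in Set.Ioi (t ^ 2 * s ^ (-(2/α))),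
        1 / ((1 + u ^ (1 / (2/α))) * Real.sqrt (u - t ^ 2 * s ^ (-(2/α))))) ) =
    Real.exp (-(lam * p * s ^ ((2/α) / 2) *
      ∫ u in Set.Ioi (t ^ 2 * s ^ (-(2/α))), phi α (t ^ 2 * s ^ (-(2/α))) u)) := by
  unfold phi
  rw [one_div_div]

lemma one_sub_exp_le (x : ℝ) : 1 - Real.exp (-x) ≤ x := by
  have := Real.add_one_le_exp (-x)
  linarith

lemma outer_bounds {α lam p : ℝ} (hα : 2 < α) (hlam : 0 < lam) (hp0 : 0 < p)
    {s : ℝ} (hs : 0 < s) :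
    0 ≤ (∫ t in Set.Ioi (0:ℝ), (1 - Lfun lam p (2/α) t s)) ∧
    (∫ t in Set.Ioi (0:ℝ), (1 - Lfun lam p (2/α) t s)) ≤
      lam * p * ((2 + 2/(α-2)) + (2 + 2/(α-1))/(α-2)) * s ^ (2/α) := by
  have hα0 : (0:ℝ) < α := by linarith
  have hq : (2/α)/2 = 1/α := by rw [div_div, mul_comm, ← div_div]; norm_num
  set q : ℝ := 1/α with hqdef
  have hqpos : 0 < q := by positivity
  set c : ℝ := lam * p with hc
  have hcpos : 0 < c := mul_pos hlam hp0
  set C0 : ℝ := 2 + 2/(α-2) with hC0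
  set C2 : ℝ := 2 + 2/(α-1) with hC2
  have hC0pos : 0 < C0 := by
    have : (0:ℝ) < 2/(α-2) := div_pos (by norm_num) (by linarith)
    rw [hC0]; linarith
  have hC2pos : 0 < C2 := by
    have : (0:ℝ) < 2/(α-1) := div_pos (by norm_num) (by linarith)
    rw [hC2]; linarith
  set T : ℝ := s ^ q with hT
  have hTpos : 0 < T := Real.rpow_pos_of_pos hs q
  have hsq : 0 < s ^ q := hTpos
  -- rewrite Lfun integrand
  have hLfun : ∀ t : ℝ, Lfun lam p (2/α) t s =
      Real.exp (-(c * s ^ q *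
        ∫ u in Set.Ioi (t ^ 2 * s ^ (-(2/α))), phi α (t ^ 2 * s ^ (-(2/α))) u)) := by
    intro t
    unfold Lfun
    rw [Lfun_eq, hq]
  have ha0 : ∀ t : ℝ, 0 ≤ t ^ 2 * s ^ (-(2/α)) := fun t =>
    mul_nonneg (sq_nonneg t) (Real.rpow_nonneg hs.le _)
  -- nonnegativity of integrand
  have hnn : ∀ t : ℝ, 0 ≤ 1 - Lfun lam p (2/α) t s := by
    intro t
    rw [hLfun t]
    have hin : 0 ≤ ∫ u in Set.Ioi (t ^ 2 * s ^ (-(2/α))), phi α (t ^ 2 * s ^ (-(2/α))) u :=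
      inner_nonneg (ha0 t)
    have : Real.exp (-(c * s ^ q * (∫ u in Set.Ioi (t ^ 2 * s ^ (-(2/α))),
        phi α (t ^ 2 * s ^ (-(2/α))) u))) ≤ 1 := by
      rw [Real.exp_le_one_iff]
      have : 0 ≤ c * s ^ q * (∫ u in Set.Ioi (t ^ 2 * s ^ (-(2/α))),
          phi α (t ^ 2 * s ^ (-(2/α))) u) := by positivity
      linarith
    linarith
  constructor
  · exact setIntegral_nonneg measurableSet_Ioi fun t _ => hnn t
  -- upper bound
  have hmain : (∫ t in Set.Ioi (0:ℝ), (1 - Lfun lam p (2/α) t s)) ≤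
      (∫ t in Set.Ioc (0:ℝ) T, (c * s ^ q * C0)) +
        ∫ t in Set.Ioi T, (c * s ^ q * C2 * s ^ (q * (α - 1))) * t ^ (1 - α) := by
    apply inner_le_of_pieces _ _ _ (fun t _ => hnn t)
    · exact ((integrableOn_const_iff).mpr (Or.inr measure_Ioc_lt_top))
    · exact (integrableOn_Ioi_rpow_of_lt (by linarith : 1 - α < -1) hTpos).const_mul _
    · intro t _
      rw [hLfun t]
      set a := t ^ 2 * s ^ (-(2/α)) with hadef
      have hin0 : 0 ≤ ∫ u in Set.Ioi a, phi α a u := inner_nonneg (ha0 t)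
      have hinC0 : (∫ u in Set.Ioi a, phi α a u) ≤ C0 := inner_bound_a hα (ha0 t)
      calc 1 - Real.exp (-(c * s ^ q * ∫ u in Set.Ioi a, phi α a u)) ≤
            c * s ^ q * ∫ u in Set.Ioi a, phi α a u := one_sub_exp_le _
        _ ≤ c * s ^ q * C0 := by
            apply mul_le_mul_of_nonneg_left hinC0 (by positivity)
    · intro t ht
      have htpos : 0 < t := lt_trans hTpos (Set.mem_Ioi.mp ht)
      rw [hLfun t]
      set a := t ^ 2 * s ^ (-(2/α)) with hadef
      have hapos : 0 < a := mul_pos (by positivity) (Real.rpow_pos_of_pos hs _)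
      have hin0 : 0 ≤ ∫ u in Set.Ioi a, phi α a u := inner_nonneg (ha0 t)
      have hinb : (∫ u in Set.Ioi a, phi α a u) ≤ C2 * a ^ ((1 - α)/2) :=
        inner_bound_b hα hapos
      have harw : a ^ ((1 - α)/2) = s ^ (q * (α - 1)) * t ^ (1 - α) := by
        rw [hadef, Real.mul_rpow (sq_nonneg t) (Real.rpow_nonneg hs.le _)]
        have h1 : (t ^ 2 : ℝ) ^ ((1 - α)/2) = t ^ (1 - α) := by
          rw [show (t ^ 2 : ℝ) = t ^ (2:ℝ) from by
              rw [← Real.rpow_natCast t 2]; norm_num,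
            ← Real.rpow_mul htpos.le]
          congr 1; ring
        have h2 : (s ^ (-(2/α)) : ℝ) ^ ((1 - α)/2) = s ^ (q * (α - 1)) := by
          rw [← Real.rpow_mul hs.le]
          congr 1
          rw [hqdef]
          ring
        rw [h1, h2]
        ring
      calc 1 - Real.exp (-(c * s ^ q * ∫ u in Set.Ioi a, phi α a u)) ≤
            c * s ^ q * ∫ u in Set.Ioi a, phi α a u := one_sub_exp_le _
        _ ≤ c * s ^ q * (C2 * a ^ ((1 - α)/2)) :=
            mul_le_mul_of_nonneg_left hinb (by positivity)
        _ = (c * s ^ q * C2 * s ^ (q * (α - 1))) * t ^ (1 - α) := by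
            rw [harw]; ring
    · intro t _
      positivity
    · intro t ht
      have htpos : 0 < t := lt_trans hTpos (Set.mem_Ioi.mp ht)
      positivity
  refine hmain.trans ?_
  have e1 : (∫ _t in Set.Ioc (0:ℝ) T, (c * s ^ q * C0)) = T * (c * s ^ q * C0) := by
    rw [MeasureTheory.setIntegral_const, Real.volume_real_Ioc, smul_eq_mul,
      max_eq_left (by linarith : (0:ℝ) ≤ T - 0)]
    norm_num
  have e2 : (∫ t in Set.Ioi T, (c * s ^ q * C2 * s ^ (q * (α - 1))) * t ^ (1 - α)) =
      (c * s ^ q * C2 * s ^ (q * (α - 1))) * (T ^ (2 - α) / (α - 2)) := by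
    rw [MeasureTheory.integral_const_mul,
      integral_Ioi_rpow_of_lt (by linarith : 1 - α < -1) hTpos]
    congr 1
    rw [show (1:ℝ) - α + 1 = 2 - α from by ring]
    rw [show (2:ℝ) - α = -(α - 2) from by ring, div_neg, neg_div, neg_neg]
  have hTe : T ^ (2 - α) = s ^ (q * (2 - α)) := by
    rw [hT, ← Real.rpow_mul hs.le]
  have h2q : s ^ q * s ^ q = s ^ (2/α) := by
    rw [← Real.rpow_add hs]; congr 1; rw [hqdef]; ring
  have h3 : s ^ (q * (α - 1)) * (s ^ (q * (2 - α)) * s ^ q) = s ^ (2/α) := by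
    rw [← Real.rpow_add hs, ← Real.rpow_add hs]; congr 1; rw [hqdef]; ring
  apply le_of_eq
  rw [e1, e2, hTe, hT]
  rw [show s ^ q * (c * s ^ q * C0) +
      c * s ^ q * C2 * s ^ (q * (α - 1)) * (s ^ (q * (2 - α)) / (α - 2)) =
      c * C0 * (s ^ q * s ^ q) +
        (c * C2 / (α - 2)) * (s ^ (q * (α - 1)) * (s ^ (q * (2 - α)) * s ^ q)) from by ring]
  rw [h2q, h3]
  ring

theorem stmt9 (α D lam mu p m : ℝ) (hα : 2 < α) (hD : 0 < D) (hlam : 0 < lam)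
    (hmu : 0 < mu) (hp0 : 0 < p) (hp1 : p ≤ 1) (hm : m = 2 ∨ m = 4)
    (δ : ℝ) (hδ : δ = 2 / α) :
    Tendsto (fun θ : ℝ =>
        (1 - pm α D lam mu p m θ) / (m * lam * p * D * kappa (δ / 2) * θ ^ (δ / 2)))
      (nhdsWithin 0 (Set.Ioi 0)) (nhds 1) := by
  subst hδ
  have hα0 : (0:ℝ) < α := by linarith
  have hm0 : (0:ℝ) < m := by rcases hm with h | h <;> rw [h] <;> norm_num
  have hq : (2/α)/2 = 1/α := by rw [div_div, mul_comm, ← div_div]; norm_num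
  set q : ℝ := 1/α with hqdef
  have hqpos : 0 < q := by positivity
  have hqlt : q < 1 := by rw [hqdef, div_lt_one hα0]; linarith
  have hkappa : 0 < kappa q := by
    unfold kappa
    exact mul_pos (Real.Gamma_pos_of_pos (by linarith)) (Real.Gamma_pos_of_pos (by linarith))
  set A : ℝ := m * lam * p * D * kappa q with hA
  have hApos : 0 < A := by
    apply mul_pos (mul_pos (mul_pos (mul_pos hm0 hlam) hp0) hD) hkappa
  set C3 : ℝ := (2 + 2/(α-2)) + (2 + 2/(α-1))/(α-2) with hC3
  have hC3pos : 0 < C3 := by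
    have h1 : (0:ℝ) < 2/(α-2) := div_pos (by norm_num) (by linarith)
    have h2 : (0:ℝ) < 2/(α-1) := div_pos (by norm_num) (by linarith)
    have h3 : (0:ℝ) < (2 + 2/(α-1))/(α-2) := div_pos (by linarith) (by linarith)
    rw [hC3]; linarith
  set K : ℝ := 2 * mu * (lam * p * C3 * (D ^ α) ^ (2/α)) / A with hK
  have hDα : (0:ℝ) < D ^ α := Real.rpow_pos_of_pos hD α
  have hKpos : 0 < K := by
    apply div_pos _ hApos
    have : (0:ℝ) < (D ^ α) ^ (2/α) := Real.rpow_pos_of_pos hDα _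
    positivity
  -- the integral I θ
  set I : ℝ → ℝ := fun θ => ∫ t in Set.Ioi (0:ℝ), (1 - Lfun lam p (2/α) t (θ * D ^ α)) with hI
  -- pm in convenient form
  have hpm : ∀ θ : ℝ, pm α D lam mu p m θ =
      Real.exp (-(A * θ ^ q) - 2 * mu * I θ) := by
    intro θ
    rw [pm, hI]
    congr 2
    rw [hq, hA]
    ring
  -- bounds on I
  have hIb : ∀ θ : ℝ, 0 < θ →
      0 ≤ I θ ∧ I θ ≤ lam * p * C3 * (θ ^ (2/α) * (D ^ α) ^ (2/α)) := by
    intro θ hθ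
    have hs : 0 < θ * D ^ α := mul_pos hθ hDα
    obtain ⟨h1, h2⟩ := outer_bounds hα hlam hp0 hs
    refine ⟨h1, h2.trans_eq ?_⟩
    rw [Real.mul_rpow hθ.le hDα.le]
  -- lower and upper comparison functions
  set L : ℝ → ℝ := fun θ => (1 - Real.exp (-(A * θ ^ q))) / (A * θ ^ q) with hL
  set U : ℝ → ℝ := fun θ => 1 + K * θ ^ q with hU
  -- θ ^ q → 0
  have hθq : Tendsto (fun θ : ℝ => θ ^ q) (nhdsWithin 0 (Set.Ioi 0)) (nhds 0) := by
    have h := (Real.continuousAt_rpow_const 0 q (Or.inr hqpos.le)).tendsto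
    rw [Real.zero_rpow (ne_of_gt hqpos)] at h
    exact h.mono_left nhdsWithin_le_nhds
  -- limit of U
  have hUlim : Tendsto U (nhdsWithin 0 (Set.Ioi 0)) (nhds 1) := by
    have : Tendsto (fun θ : ℝ => 1 + K * θ ^ q) (nhdsWithin 0 (Set.Ioi 0))
        (nhds (1 + K * 0)) := tendsto_const_nhds.add (hθq.const_mul K)
    simpa using this
  -- limit of L
  have hLlim : Tendsto L (nhdsWithin 0 (Set.Ioi 0)) (nhds 1) := by
    have hslope : Tendsto (slope Real.exp 0) (nhdsWithin 0 {(0:ℝ)}ᶜ) (nhds 1) := by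
      have h := hasDerivAt_iff_tendsto_slope.mp (Real.hasDerivAt_exp 0)
      rwa [Real.exp_zero] at h
    have hg : Tendsto (fun θ : ℝ => -(A * θ ^ q)) (nhdsWithin 0 (Set.Ioi 0))
        (nhdsWithin 0 {(0:ℝ)}ᶜ) := by
      rw [tendsto_nhdsWithin_iff]
      constructor
      · have : Tendsto (fun θ : ℝ => A * θ ^ q) (nhdsWithin 0 (Set.Ioi 0))
            (nhds (A * 0)) := hθq.const_mul A
        rw [mul_zero] at this
        simpa using this.neg
      · filter_upwards [self_mem_nhdsWithin] with θ hθ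
        have h1 : 0 < A * θ ^ q := mul_pos hApos (Real.rpow_pos_of_pos hθ q)
        simp only [Set.mem_compl_iff, Set.mem_singleton_iff]
        intro hcontra
        rw [neg_eq_zero] at hcontra
        exact absurd hcontra (ne_of_gt h1)
    have hcomp := hslope.comp hg
    apply hcomp.congr'
    filter_upwards [self_mem_nhdsWithin] with θ hθ
    have h1 : 0 < A * θ ^ q := mul_pos hApos (Real.rpow_pos_of_pos hθ q)
    show slope Real.exp 0 (-(A * θ ^ q)) = L θ
    rw [slope_def_field, hL, Real.exp_zero]
    simp only
    rw [show Real.exp (-(A * θ ^ q)) - 1 = -(1 - Real.exp (-(A * θ ^ q))) from by ring,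
      sub_zero, neg_div_neg_eq]
  -- squeeze
  apply tendsto_of_tendsto_of_tendsto_of_le_of_le' hLlim hUlim
  · -- L ≤ ratio
    filter_upwards [self_mem_nhdsWithin] with θ hθ
    have hθ0 : (0:ℝ) < θ := hθ
    have hden : 0 < A * θ ^ q := mul_pos hApos (Real.rpow_pos_of_pos hθ0 q)
    obtain ⟨hI0, _⟩ := hIb θ hθ0
    have hE : -(A * θ ^ q) - 2 * mu * I θ ≤ -(A * θ ^ q) := by nlinarith
    have hexp : Real.exp (-(A * θ ^ q) - 2 * mu * I θ) ≤ Real.exp (-(A * θ ^ q)) :=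
      Real.exp_le_exp.mpr hE
    have hnum : 1 - Real.exp (-(A * θ ^ q)) ≤ 1 - pm α D lam mu p m θ := by
      rw [hpm θ]; linarith
    have hdeneq : m * lam * p * D * kappa (2/α/2) * θ ^ (2/α/2) = A * θ ^ q := by
      rw [hq, hA]
    calc L θ ≤ (1 - pm α D lam mu p m θ) / (A * θ ^ q) :=
          (div_le_div_iff_of_pos_right hden).mpr hnum
      _ = (1 - pm α D lam mu p m θ) / (m * lam * p * D * kappa (2/α/2) * θ ^ (2/α/2)) := by
          rw [hdeneq]
  · -- ratio ≤ U
    filter_upwards [self_mem_nhdsWithin] with θ hθ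
    have hθ0 : (0:ℝ) < θ := hθ
    have hθqpos : 0 < θ ^ q := Real.rpow_pos_of_pos hθ0 q
    have hden : 0 < A * θ ^ q := mul_pos hApos hθqpos
    obtain ⟨hI0, hI2⟩ := hIb θ hθ0
    have h2q : θ ^ ((2:ℝ)/α) = θ ^ q * θ ^ q := by
      rw [← Real.rpow_add hθ0]; congr 1; rw [hqdef]; ring
    have hKA : K * A = 2 * mu * (lam * p * C3 * (D ^ α) ^ (2/α)) := by
      rw [hK, div_mul_cancel₀ _ (ne_of_gt hApos)]
    have hnum : 1 - pm α D lam mu p m θ ≤ A * θ ^ q + K * A * (θ ^ q * θ ^ q) := by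
      rw [hpm θ]
      have h1 : 1 - Real.exp (-(A * θ ^ q + 2 * mu * I θ)) ≤ A * θ ^ q + 2 * mu * I θ :=
        one_sub_exp_le _
      have h2 : 2 * mu * I θ ≤ K * A * (θ ^ q * θ ^ q) := by
        rw [hKA, ← h2q]
        calc 2 * mu * I θ ≤ 2 * mu * (lam * p * C3 * (θ ^ ((2:ℝ)/α) * (D ^ α) ^ (2/α))) := by
              apply mul_le_mul_of_nonneg_left hI2 (by positivity)
          _ = 2 * mu * (lam * p * C3 * (D ^ α) ^ (2/α)) * θ ^ ((2:ℝ)/α) := by ring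
      have h3 : -(A * θ ^ q) - 2 * mu * I θ = -(A * θ ^ q + 2 * mu * I θ) := by ring
      rw [h3]
      linarith
    have hdeneq : m * lam * p * D * kappa (2/α/2) * θ ^ (2/α/2) = A * θ ^ q := by
      rw [hq, hA]
    have heq : (A * θ ^ q + K * A * (θ ^ q * θ ^ q)) / (A * θ ^ q) = 1 + K * θ ^ q := by
      rw [div_eq_iff (ne_of_gt hden)]; ring
    calc (1 - pm α D lam mu p m θ) / (m * lam * p * D * kappa (2/α/2) * θ ^ (2/α/2))
        = (1 - pm α D lam mu p m θ) / (A * θ ^ q) := by rw [hdeneq]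
      _ ≤ (A * θ ^ q + K * A * (θ ^ q * θ ^ q)) / (A * θ ^ q) :=
          (div_le_div_iff_of_pos_right hden).mpr hnum
      _ = U θ := by rw [heq]
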